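/- arXiv:2208.09729 — 6 statements merged into one kernel-verified Lean document; each statement's English description precedes it below -/
import Mathlib

section
/- Let x be an integer and n₁, n₂ ≥ 2 be positive integers with gcd(n₁,n₂)=1. Then x is not in the numerical semigroup ⟨n₁,n₂⟩ = {t₁n₁ + t₂n₂ : t₁,t₂ ∈ ℕ} if and only if x = n₁n₂ - a·n₁ - b·n₂ for some positive integers a, b. -/
/-!
An integer `x` has a representation `x = c * n₁ + t * n₂` with `0 ≤ c < n₂`; if `t ≥ 0` it lies in
`⟨n₁, n₂⟩`, and otherwise `x = n₁ n₂ - (n₂ - c) n₁ - (-t) n₂`. Conversely, writing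
`n₁ n₂ - a n₁ - b n₂ = t₁ n₁ + t₂ n₂` gives `(t₁ + a) n₁ + (t₂ + b) n₂ = n₁ n₂`, and coprimality
forces `n₂ ≤ t₁ + a` and `n₁ ≤ t₂ + b`, so the left side is at least `2 n₁ n₂`.
-/

def numericalSemigroup (n₁ n₂ : ℤ) : Set ℤ :=
  {y : ℤ | ∃ t₁ t₂ : ℕ, y = t₁ * n₁ + t₂ * n₂}

theorem mul_add_mul_mem_numericalSemigroup {n₁ n₂ c t : ℤ} (hc : 0 ≤ c) (ht : 0 ≤ t) :
    c * n₁ + t * n₂ ∈ numericalSemigroup n₁ n₂ := by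
  lift c to ℕ using hc
  lift t to ℕ using ht
  exact ⟨c, t, rfl⟩

theorem IsCoprime.exists_eq_mul_add_mul {n₁ n₂ : ℤ} (hco : IsCoprime n₁ n₂) (hn₂ : 0 < n₂)
    (x : ℤ) : ∃ c t : ℤ, 0 ≤ c ∧ c < n₂ ∧ x = c * n₁ + t * n₂ := by
  obtain ⟨u, v, huv⟩ := hco
  refine ⟨u * x % n₂, v * x + u * x / n₂ * n₁, Int.emod_nonneg _ hn₂.ne',
    Int.emod_lt_of_pos _ hn₂, ?_⟩
  have hdiv := Int.mul_ediv_add_emod (u * x) n₂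
  linear_combination (-x) * huv - n₁ * hdiv

theorem IsCoprime.mul_add_mul_ne_mul {n₁ n₂ p q : ℤ} (hco : IsCoprime n₁ n₂) (hn₁ : 0 < n₁)
    (hn₂ : 0 < n₂) (hp : 0 < p) (hq : 0 < q) : p * n₁ + q * n₂ ≠ n₁ * n₂ := by
  intro h
  have hq' : n₁ ≤ q :=
    Int.le_of_dvd hq (hco.dvd_of_dvd_mul_right ⟨n₂ - p, by linear_combination h⟩)
  have hp' : n₂ ≤ p :=
    Int.le_of_dvd hp (hco.symm.dvd_of_dvd_mul_right ⟨n₁ - q, by linear_combination h⟩)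
  nlinarith

theorem IsCoprime.mul_sub_mul_sub_mul_notMem_numericalSemigroup {n₁ n₂ a b : ℤ}
    (hco : IsCoprime n₁ n₂) (hn₁ : 0 < n₁) (hn₂ : 0 < n₂) (ha : 0 < a) (hb : 0 < b) :
    n₁ * n₂ - a * n₁ - b * n₂ ∉ numericalSemigroup n₁ n₂ := by
  rintro ⟨t₁, t₂, h⟩
  exact hco.mul_add_mul_ne_mul hn₁ hn₂ (p := t₁ + a) (q := t₂ + b) (by positivity)
    (by positivity) (by linear_combination -h)

/-- x ∉ ⟨n₁,n₂⟩ iff x = n₁n₂ - a n₁ - b n₂ for some positive integers a, b. -/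
theorem stmt1 (x n1 n2 : ℤ) (h1 : 2 ≤ n1) (h2 : 2 ≤ n2) (hco : IsCoprime n1 n2) :
    x ∉ {y : ℤ | ∃ t1 t2 : ℕ, y = t1 * n1 + t2 * n2} ↔
      ∃ a b : ℕ, 0 < a ∧ 0 < b ∧ x = n1 * n2 - a * n1 - b * n2 := by
  have hn1 : 0 < n1 := by omega
  have hn2 : 0 < n2 := by omega
  change x ∉ numericalSemigroup n1 n2 ↔ _
  constructor
  · obtain ⟨c, t, hc, hcn, rfl⟩ := hco.exists_eq_mul_add_mul hn2 x
    intro hx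
    have ht : t < 0 := by
      by_contra! ht
      exact hx (mul_add_mul_mem_numericalSemigroup hc ht)
    refine ⟨(n2 - c).toNat, (-t).toNat, by omega, by omega, ?_⟩
    rw [Int.toNat_of_nonneg (by omega), Int.toNat_of_nonneg (by omega)]
    ring
  · rintro ⟨a, b, ha, hb, rfl⟩
    exact hco.mul_sub_mul_sub_mul_notMem_numericalSemigroup hn1 hn2 (by omega) (by omega)
end

section
/- Let r, m, λ₁,…,λ_r be positive integers, λ₀ = λ₁ + ⋯ + λ_r, r < λ₀, and define η_k = max { min_{1≤i≤r} ⌊s_i m / λ_i⌋ : ∑_{i=1}^r s_i = k, 1 ≤ s_i ≤ λ_i } for r ≤ k ≤ λ₀ - 1. Then the multiset {η_k : r ≤ k ≤ λ₀ - 1} equals the multiset {⌊s m / λ_i⌋ : 1 ≤ s ≤ λ_i - 1, 1 ≤ i ≤ r}. -/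
/-!
For `t : ℕ` let `a_i(t)` be the least `s ≥ 1` with `t ≤ ⌊s m / λ_i⌋`. Tuples with
`a_i(t) ≤ s_i ≤ λ_i` realise every sum between `∑ a_i(t)` and `λ₀`, so `t ≤ η_k` exactly when
`∑ a_i(t) ≤ k`. Hence both multisets have `λ₀ - ∑ a_i(t)` elements `≥ t` for every `t`, and a
multiset of naturals is determined by these counts.
-/

open Finset

/-- min over i < r of ⌊s i * m / lam i⌋ -/
noncomputable def kinf (m r : ℕ) (lam : ℕ → ℕ) (s : ℕ → ℕ) : ℕ :=
  sInf {w : ℕ | ∃ i, i < r ∧ w = s i * m / lam i}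

/-- η_k = max over tuples (s_1,…,s_r) with 1 ≤ s_i ≤ λ_i and ∑ s_i = k of min_i ⌊s_i m/λ_i⌋ -/
noncomputable def eta (m r : ℕ) (lam : ℕ → ℕ) (k : ℕ) : ℕ :=
  sSup {v : ℕ | ∃ s : ℕ → ℕ, (∀ i, i < r → 1 ≤ s i ∧ s i ≤ lam i) ∧
      (∑ i ∈ Finset.range r, s i) = k ∧ v = kinf m r lam s}

/-- extended η: 0 for k < r, η_k for r ≤ k < λ₀, m-1 for k ≥ λ₀ -/
noncomputable def etaExt (m r lam0 : ℕ) (lam : ℕ → ℕ) (k : ℕ) : ℕ :=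
  if k < r then 0 else if k < lam0 then eta m r lam k else m - 1

/-- ε_k = m k - λ₀ (η_k + 1) -/
noncomputable def eps (m r lam0 : ℕ) (lam : ℕ → ℕ) (k : ℕ) : ℤ :=
  (m : ℤ) * k - (lam0 : ℤ) * (etaExt m r lam0 lam k + 1)

def IsNumericalSemigroup (H : Set ℕ) : Prop :=
  0 ∈ H ∧ (∀ a ∈ H, ∀ b ∈ H, a + b ∈ H) ∧ {x : ℕ | x ∉ H}.Finite

lemma exists_sum_range_eq {r : ℕ} {a b : ℕ → ℕ} (hab : ∀ i < r, a i ≤ b i) {k : ℕ}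
    (hak : ∑ i ∈ range r, a i ≤ k) (hkb : k ≤ ∑ i ∈ range r, b i) :
    ∃ s : ℕ → ℕ, (∀ i < r, a i ≤ s i ∧ s i ≤ b i) ∧ ∑ i ∈ range r, s i = k := by
  induction r generalizing k with
  | zero => exact ⟨0, by simp, by simp_all⟩
  | succ n ih =>
    rw [sum_range_succ] at hak hkb
    -- the last coordinate takes as little as possible, the first `n` absorb the rest
    obtain ⟨c, hc⟩ : ∃ c, c = max (a n) (k - ∑ i ∈ range n, b i) := ⟨_, rfl⟩
    have hn : a n ≤ b n := hab n n.lt_succ_self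
    have hab' : ∑ i ∈ range n, a i ≤ ∑ i ∈ range n, b i :=
      sum_le_sum fun i hi => hab i (Nat.lt_succ_of_lt (mem_range.1 hi))
    have hlow : ∑ i ∈ range n, a i ≤ k - c := by omega
    have hupp : k - c ≤ ∑ i ∈ range n, b i := by omega
    obtain ⟨s, hs, hsum⟩ := ih (fun i hi => hab i (by omega)) hlow hupp
    refine ⟨Function.update s n c, fun i hi => ?_, ?_⟩
    · rcases Nat.lt_succ_iff_lt_or_eq.1 hi with hi | rfl
      · simpa [Function.update_of_ne hi.ne] using hs i hi
      · simp only [Function.update_self]; omega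
    · rw [sum_range_succ, sum_update_of_notMem (by simp), hsum, Function.update_self]
      omega

/-- The least `s ≥ 1` with `t ≤ s * m / L` (for `0 < m` and `0 < L`). -/
def threshold (m L t : ℕ) : ℕ := max 1 (t * L ⌈/⌉ m)

section threshold

variable {m L : ℕ}

lemma one_le_threshold {t : ℕ} : 1 ≤ threshold m L t := le_max_left _ _

lemma threshold_le_iff (hm : 0 < m) (hL : 0 < L) {t s : ℕ} :
    threshold m L t ≤ s ↔ 1 ≤ s ∧ t ≤ s * m / L := by
  rw [threshold, max_le_iff, ceilDiv_le_iff_le_mul hm, Nat.le_div_iff_mul_le hL, mul_comm m]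

lemma threshold_le_self_iff (hm : 0 < m) (hL : 0 < L) {t : ℕ} :
    threshold m L t ≤ L ↔ t ≤ m := by
  rw [threshold_le_iff hm hL, Nat.mul_div_cancel_left m hL]
  exact and_iff_right hL

end threshold

lemma card_filter_Ico_eq_sub {a b c : ℕ} {p : ℕ → Prop} [DecidablePred p] (hac : a ≤ c)
    (hp : ∀ k, a ≤ k → k < b → (p k ↔ c ≤ k)) : ((Ico a b).filter p).card = b - c := by
  have : (Ico a b).filter p = Ico c b := by
    ext k
    simp only [mem_filter, mem_Ico]
    constructor
    · rintro ⟨⟨hak, hkb⟩, hpk⟩; exact ⟨(hp k hak hkb).1 hpk, hkb⟩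
    · rintro ⟨hck, hkb⟩; exact ⟨⟨hac.trans hck, hkb⟩, (hp k (hac.trans hck) hkb).2 hck⟩
  rw [this, Nat.card_Ico]

lemma Multiset.countP_bind {α β : Type*} (p : β → Prop) [DecidablePred p] (s : Multiset α)
    (f : α → Multiset β) : (s.bind f).countP p = (s.map fun a => (f a).countP p).sum := by
  simp only [countP_eq_card_filter, filter_bind, card_bind, Function.comp_def]

lemma Multiset.eq_of_forall_countP_le_eq {M N : Multiset ℕ}
    (h : ∀ t, M.countP (t ≤ ·) = N.countP (t ≤ ·)) : M = N := by
  have split (P : Multiset ℕ) (a : ℕ) : P.countP (a ≤ ·) = P.count a + P.countP (a + 1 ≤ ·) := by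
    induction P using Multiset.induction_on with
    | empty => simp
    | cons x P ih => simp only [countP_cons, count_cons, ih]; split_ifs <;> omega
  ext a
  have := h a
  have := h (a + 1)
  have := split M a
  have := split N a
  omega

section eta

variable {m r : ℕ} {lam : ℕ → ℕ}

lemma le_kinf_iff (hr : 0 < r) {s : ℕ → ℕ} {t : ℕ} :
    t ≤ kinf m r lam s ↔ ∀ i < r, t ≤ s i * m / lam i := by
  have hne : {w : ℕ | ∃ i < r, w = s i * m / lam i}.Nonempty := ⟨_, 0, hr, rfl⟩
  rw [kinf, le_csInf_iff' hne]
  exact ⟨fun h i hi => h ⟨i, hi, rfl⟩, by rintro h _ ⟨i, hi, rfl⟩; exact h i hi⟩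

lemma le_eta_iff (hr : 0 < r) (hlam : ∀ i < r, 0 < lam i) {k t : ℕ} (hrk : r ≤ k)
    (hk : k ≤ ∑ i ∈ range r, lam i) :
    t ≤ eta m r lam k ↔ ∃ s : ℕ → ℕ, (∀ i < r, 1 ≤ s i ∧ s i ≤ lam i) ∧
      ∑ i ∈ range r, s i = k ∧ ∀ i < r, t ≤ s i * m / lam i := by
  set S := {v : ℕ | ∃ s : ℕ → ℕ, (∀ i < r, 1 ≤ s i ∧ s i ≤ lam i) ∧
      ∑ i ∈ range r, s i = k ∧ v = kinf m r lam s}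
  have hne : S.Nonempty := by
    obtain ⟨s, hs, hsum⟩ := exists_sum_range_eq hlam (a := fun _ => 1) (by simpa using hrk) hk
    exact ⟨_, s, hs, hsum, rfl⟩
  have hbdd : BddAbove S := by
    refine ⟨lam 0 * m, ?_⟩
    rintro _ ⟨s, hs, -, rfl⟩
    calc kinf m r lam s ≤ s 0 * m / lam 0 := (le_kinf_iff hr).1 le_rfl 0 hr
      _ ≤ s 0 * m := Nat.div_le_self _ _
      _ ≤ lam 0 * m := Nat.mul_le_mul_right _ (hs 0 hr).2
  constructor
  · intro ht
    obtain ⟨s, hs, hsum, hv⟩ := Nat.sSup_mem hne hbdd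
    exact ⟨s, hs, hsum, (le_kinf_iff hr).1 (hv ▸ ht)⟩
  · rintro ⟨s, hs, hsum, hts⟩
    exact ((le_kinf_iff hr).2 hts).trans (le_csSup hbdd ⟨s, hs, hsum, rfl⟩)

lemma le_eta_iff_sum_threshold_le (hm : 0 < m) (hr : 0 < r) (hlam : ∀ i < r, 0 < lam i)
    {k t : ℕ} (hrk : r ≤ k) (hk : k ≤ ∑ i ∈ range r, lam i) :
    t ≤ eta m r lam k ↔ ∑ i ∈ range r, threshold m (lam i) t ≤ k := by
  rw [le_eta_iff hr hlam hrk hk]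
  constructor
  · rintro ⟨s, hs, rfl, hts⟩
    refine sum_le_sum fun i hi => ?_
    rw [mem_range] at hi
    exact (threshold_le_iff hm (hlam i hi)).2 ⟨(hs i hi).1, hts i hi⟩
  · intro hsum
    by_cases htm : t ≤ m
    · have hle : ∀ i < r, threshold m (lam i) t ≤ lam i :=
        fun i hi => (threshold_le_self_iff hm (hlam i hi)).2 htm
      obtain ⟨s, hs, hsk⟩ := exists_sum_range_eq hle hsum hk
      have hs' : ∀ i < r, 1 ≤ s i ∧ t ≤ s i * m / lam i :=
        fun i hi => (threshold_le_iff hm (hlam i hi)).1 (hs i hi).1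
      exact ⟨s, fun i hi => ⟨(hs' i hi).1, (hs i hi).2⟩, hsk, fun i hi => (hs' i hi).2⟩
    · have hlt : ∑ i ∈ range r, lam i < ∑ i ∈ range r, threshold m (lam i) t := by
        refine sum_lt_sum_of_nonempty (nonempty_range_iff.2 hr.ne') fun i hi => ?_
        rw [mem_range] at hi
        exact not_le.1 ((threshold_le_self_iff hm (hlam i hi)).not.2 htm)
      omega

lemma countP_map_eta_Ico (hm : 0 < m) (hr : 0 < r) (hlam : ∀ i < r, 0 < lam i) {lam0 : ℕ}
    (h0 : lam0 = ∑ i ∈ range r, lam i) (t : ℕ) :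
    ((Ico r lam0).val.map (eta m r lam)).countP (t ≤ ·) =
      lam0 - ∑ i ∈ range r, threshold m (lam i) t := by
  rw [Multiset.countP_map]
  refine card_filter_Ico_eq_sub ?_ fun k hrk hk => ?_
  · simpa using sum_le_sum fun i (_ : i ∈ range r) => one_le_threshold (m := m) (L := lam i) (t := t)
  · exact le_eta_iff_sum_threshold_le hm hr hlam hrk (h0 ▸ hk.le)

lemma countP_bind_floor (hm : 0 < m) (hlam : ∀ i < r, 0 < lam i) (t : ℕ) :
    ((range r).val.bind fun i => (Ico 1 (lam i)).val.map fun s => s * m / lam i).countP (t ≤ ·) =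
      ∑ i ∈ range r, (lam i - threshold m (lam i) t) := by
  rw [Multiset.countP_bind]
  refine sum_congr rfl fun i hi => ?_
  rw [Multiset.countP_map]
  refine card_filter_Ico_eq_sub one_le_threshold fun s hs _ => ?_
  rw [threshold_le_iff hm (hlam i (mem_range.1 hi))]
  exact (and_iff_right hs).symm

lemma sum_tsub_threshold (hm : 0 < m) (hlam : ∀ i < r, 0 < lam i) (t : ℕ) :
    ∑ i ∈ range r, (lam i - threshold m (lam i) t) =
      ∑ i ∈ range r, lam i - ∑ i ∈ range r, threshold m (lam i) t := by
  by_cases htm : t ≤ m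
  · exact sum_tsub_distrib _ fun i hi => (threshold_le_self_iff hm (hlam i (mem_range.1 hi))).2 htm
  · have hlt : ∀ i ∈ range r, lam i ≤ threshold m (lam i) t := fun i hi =>
      (not_le.1 ((threshold_le_self_iff hm (hlam i (mem_range.1 hi))).not.2 htm)).le
    rw [sum_eq_zero fun i hi => Nat.sub_eq_zero_of_le (hlt i hi),
      Nat.sub_eq_zero_of_le (sum_le_sum hlt)]

end eta

theorem stmt3_general (m r : ℕ) (lam : ℕ → ℕ) (hm : 0 < m) (hr : 0 < r)
    (hlam : ∀ i, i < r → 0 < lam i) (lam0 : ℕ)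
    (h0 : lam0 = ∑ i ∈ Finset.range r, lam i) :
    (Finset.Ico r lam0).val.map (eta m r lam) =
      (Finset.range r).val.bind
        (fun i => (Finset.Ico 1 (lam i)).val.map (fun s => s * m / lam i)) := by
  refine Multiset.eq_of_forall_countP_le_eq fun t => ?_
  rw [countP_map_eta_Ico hm hr hlam h0, countP_bind_floor hm hlam, sum_tsub_threshold hm hlam, h0]

/-- The multiset {η_k : r ≤ k ≤ λ₀-1} equals the multiset {⌊s m/λ_i⌋ : 1 ≤ s ≤ λ_i - 1, 1 ≤ i ≤ r}. -/
theorem stmt3 (m r : ℕ) (lam : ℕ → ℕ) (hm : 0 < m) (hr : 0 < r)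
    (hlam : ∀ i, i < r → 0 < lam i) (lam0 : ℕ)
    (h0 : lam0 = ∑ i ∈ Finset.range r, lam i) (hrl : r < lam0) :
    (Finset.Ico r lam0).val.map (eta m r lam) =
      (Finset.range r).val.bind
        (fun i => (Finset.Ico 1 (lam i)).val.map (fun s => s * m / lam i)) :=
  stmt3_general m r lam hm hr hlam lam0 h0
end

section
/- Let H be a numerical semigroup with gap set G = ℕ \ H of cardinality g (the genus), and let n be a nonzero element of H. If S ⊆ H has n elements forming a complete set of representatives of the residue classes modulo n, then S equals the Apéry set Ap(H,n) = {s ∈ H : s - n ∉ H} if and only if ∑_{a∈S} ⌊a/n⌋ = g. -/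
open Finset

/-
Write every `a : ℕ` as `a % n + n * (a / n)`. Since `H + n ⊆ H`, the elements of `H` in the
residue class `c` are exactly those whose quotient by `n` is at least some `k c` (the Kunz
coordinate), so the class contains `k c` gaps and the genus is `∑ c < n, k c`; the Apéry set
consists of the elements with quotient exactly `k c`. For a system of residues `S ⊆ H` this gives
`∑ a ∈ S, a / n ≥ ∑ c < n, k c`, with equality iff every element of `S` has the least possible
quotient, i.e. iff `S` is the Apéry set.
-/

noncomputable def kunzCoord (H : Set ℕ) (n c : ℕ) : ℕ :=
  sInf {q | c + n * q ∈ H}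

theorem ncard_setOf_div_lt_mod {n : ℕ} (hn : 0 < n) (f : ℕ → ℕ) :
    {x | x / n < f (x % n)}.ncard = ∑ c ∈ range n, f c := by
  have hdecomp : {x | x / n < f (x % n)} =
      ↑(((range n).sigma fun c => range (f c)).image fun p => p.1 + n * p.2) := by
    ext x
    simp only [Set.mem_ofPred_eq, coe_image, Set.mem_image, mem_coe, mem_sigma, mem_range]
    constructor
    · intro hx
      exact ⟨⟨x % n, x / n⟩, ⟨Nat.mod_lt x hn, hx⟩, Nat.mod_add_div x n⟩
    · rintro ⟨⟨c, q⟩, ⟨hc, hq⟩, rfl⟩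
      simpa [Nat.add_mul_div_left _ _ hn, Nat.div_eq_of_lt hc, Nat.mod_eq_of_lt hc] using hq
  rw [hdecomp, Set.ncard_coe_finset, card_image_of_injOn, card_sigma]
  · simp only [card_range]
  · rintro ⟨c, q⟩ hcq ⟨c', q'⟩ hcq' h
    simp only [coe_sigma, Set.mem_sigma_iff, mem_coe, mem_range] at hcq hcq' h
    have hmod := congrArg (· % n) h
    have hdiv := congrArg (· / n) h
    simp only [Nat.add_mul_mod_self_left, Nat.mod_eq_of_lt hcq.1, Nat.mod_eq_of_lt hcq'.1,
      Nat.add_mul_div_left _ _ hn, Nat.div_eq_of_lt hcq.1, Nat.div_eq_of_lt hcq'.1] at hmod hdiv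
    subst hmod
    simp_all

theorem sum_eq_sum_range_iff_coe_eq {n : ℕ} (hn : 0 < n) {S : Finset ℕ} (hcard : S.card = n)
    (hrep : Set.InjOn (· % n) S) {f : ℕ → ℕ} (hf : ∀ a ∈ S, f (a % n) ≤ a / n) :
    (↑S = {s | s / n = f (s % n)}) ↔ ∑ a ∈ S, a / n = ∑ c ∈ range n, f c := by
  have himg : S.image (· % n) = range n :=
    eq_of_subset_of_card_le (fun c hc => by
      obtain ⟨a, -, rfl⟩ := mem_image.1 hc
      exact mem_range.2 (Nat.mod_lt a hn))
      (by rw [card_range, card_image_of_injOn hrep, hcard])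
  rw [← himg, sum_image hrep]
  constructor
  · intro hS
    refine sum_congr rfl fun a ha => ?_
    have : a ∈ (↑S : Set ℕ) := ha
    rwa [hS] at this
  · intro hsum
    have hquot : ∀ a ∈ S, a / n = f (a % n) := fun a ha =>
      ((sum_eq_sum_iff_of_le hf).1 hsum.symm a ha).symm
    ext s
    refine ⟨hquot s, fun hs => ?_⟩
    obtain ⟨a, ha, hmod⟩ := mem_image.1 (himg ▸ mem_range.2 (Nat.mod_lt s hn))
    have hquot' : a / n = s / n := by rw [hquot a ha, hmod, hs]
    rw [mem_coe, ← Nat.mod_add_div s n, ← hmod, ← hquot', Nat.mod_add_div]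
    exact ha

section

variable {H : Set ℕ} {n : ℕ}

theorem add_mul_mem (hadd : ∀ a ∈ H, ∀ b ∈ H, a + b ∈ H) (hn : n ∈ H) {x : ℕ} (hx : x ∈ H) :
    ∀ k, x + n * k ∈ H
  | 0 => by simpa using hx
  | k + 1 => by simpa [Nat.mul_succ, ← add_assoc] using hadd _ (add_mul_mem hadd hn hx k) n hn

theorem exists_add_mul_mem (hfin : {x | x ∉ H}.Finite) (hn : 0 < n) (c : ℕ) :
    ∃ q, c + n * q ∈ H := by
  obtain ⟨N, hN⟩ := hfin.bddAbove
  refine ⟨N + 1, by_contra fun hgap => ?_⟩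
  have : c + n * (N + 1) ≤ N := hN hgap
  nlinarith

theorem mem_iff_kunzCoord_le (hadd : ∀ a ∈ H, ∀ b ∈ H, a + b ∈ H) (hfin : {x | x ∉ H}.Finite)
    (hn : n ∈ H) (hn0 : 0 < n) (a : ℕ) : a ∈ H ↔ kunzCoord H n (a % n) ≤ a / n := by
  conv_lhs => rw [← Nat.mod_add_div a n]
  refine ⟨fun ha => Nat.sInf_le ha, fun hle => ?_⟩
  have hmin : a % n + n * kunzCoord H n (a % n) ∈ H :=
    Nat.sInf_mem (exists_add_mul_mem hfin hn0 (a % n))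
  obtain ⟨k, hk⟩ := Nat.exists_eq_add_of_le hle
  rw [hk, mul_add, ← add_assoc]
  exact add_mul_mem hadd hn hmin k

theorem ncard_gaps_eq_sum_kunzCoord (hadd : ∀ a ∈ H, ∀ b ∈ H, a + b ∈ H)
    (hfin : {x | x ∉ H}.Finite) (hn : n ∈ H) (hn0 : 0 < n) :
    {x | x ∉ H}.ncard = ∑ c ∈ range n, kunzCoord H n c := by
  simp_rw [mem_iff_kunzCoord_le hadd hfin hn hn0, not_le]
  exact ncard_setOf_div_lt_mod hn0 _

theorem apery_eq_setOf_div_eq_kunzCoord (hadd : ∀ a ∈ H, ∀ b ∈ H, a + b ∈ H)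
    (hfin : {x | x ∉ H}.Finite) (hn : n ∈ H) (hn0 : 0 < n) :
    {s ∈ H | s < n ∨ s - n ∉ H} = {s | s / n = kunzCoord H n (s % n)} := by
  have hmem := mem_iff_kunzCoord_le hadd hfin hn hn0
  ext s
  simp only [Set.mem_ofPred_eq]
  rcases lt_or_ge s n with hs | hs
  · simp only [hs, true_or, and_true, hmem s, Nat.div_eq_of_lt hs, nonpos_iff_eq_zero, eq_comm]
  · obtain ⟨b, rfl⟩ := Nat.exists_eq_add_of_le' hs
    simp only [hmem, Nat.add_sub_cancel, Nat.add_mod_right, Nat.add_div_right b hn0,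
      not_lt.2 hs, false_or]
    omega

end

/-- Apéry set criterion: S = Ap(H,n) iff ∑_{a∈S} ⌊a/n⌋ equals the genus. -/
theorem stmt7 (H : Set ℕ) (hH : IsNumericalSemigroup H) (n : ℕ) (hn : n ∈ H) (hn0 : n ≠ 0)
    (S : Finset ℕ) (hS : ↑S ⊆ H) (hcard : S.card = n)
    (hrep : ∀ a ∈ S, ∀ b ∈ S, a % n = b % n → a = b) :
    (↑S = {s ∈ H | s < n ∨ s - n ∉ H}) ↔
      ∑ a ∈ S, a / n = Set.ncard {x : ℕ | x ∉ H} := by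
  obtain ⟨-, hadd, hfin⟩ := hH
  have hpos : 0 < n := Nat.pos_of_ne_zero hn0
  rw [apery_eq_setOf_div_eq_kunzCoord hadd hfin hn hpos,
    ncard_gaps_eq_sum_kunzCoord hadd hfin hn hpos]
  exact sum_eq_sum_range_iff_coe_eq hpos hcard hrep
    fun a ha => (mem_iff_kunzCoord_le hadd hfin hn hpos a).1 (hS ha)
end

section
/- Let m, r, λ₀ be positive integers with gcd(m,λ₀)=1 and r ≤ λ₀, and for k ∈ ℕ₀ set η_k = 0 if 0 ≤ k < r, η_k = m-1 if k ≥ λ₀, and η_k as in the multiset lemma for r ≤ k ≤ λ₀-1; set ε_k = m·k - λ₀·(η_k + 1). If η_k + η_{r+λ₀-1-k} = m, then ε_k + ε_{r+λ₀-1-k} = ε_{r-1} - λ₀ and ε_{r-1} > ε_k. -/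
open Finset

/-!
Writing `k' = r + λ₀ - 1 - k`, the indices satisfy `k + k' = (r - 1) + λ₀`, so the identity for
`ε_k + ε_{k'}` is pure bookkeeping once `η_k + η_{k'} = m`. For `ε_{r-1} > ε_k`, note that the
hypothesis rules out the boundary ranges `k < r` and `k ≥ λ₀` (there `η_k + η_{k'} = m - 1`), so
`0 < k' < λ₀`. Every admissible tuple satisfies `λ_i ⌊s_i m / λ_i⌋ ≤ s_i m`, whence
`λ₀ η_{k'} ≤ m k'`, and the inequality is strict because `λ₀ ∤ m k'` by coprimality.
Then `λ₀ η_k = λ₀ (m - η_{k'}) > m (λ₀ - k') = m (k - r + 1)`, which is `ε_{r-1} > ε_k`.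
-/

section EtaBounds

variable {m r : ℕ} {lam : ℕ → ℕ}

lemma sum_mul_kinf_le {s : ℕ → ℕ} {j : ℕ} (hs : ∑ i ∈ range r, s i = j) :
    (∑ i ∈ range r, lam i) * kinf m r lam s ≤ m * j := by
  have hkinf : ∀ i < r, kinf m r lam s ≤ s i * m / lam i := fun i hi =>
    csInf_le (OrderBot.bddBelow _) ⟨i, hi, rfl⟩
  calc (∑ i ∈ range r, lam i) * kinf m r lam s
      = ∑ i ∈ range r, lam i * kinf m r lam s := sum_mul ..
    _ ≤ ∑ i ∈ range r, s i * m := sum_le_sum fun i hi =>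
        (Nat.mul_le_mul_left _ (hkinf i (mem_range.mp hi))).trans (Nat.mul_div_le _ _)
    _ = m * j := by rw [← sum_mul, hs, Nat.mul_comm]

lemma sum_mul_eta_le (j : ℕ) : (∑ i ∈ range r, lam i) * eta m r lam j ≤ m * j := by
  set lam0 := ∑ i ∈ range r, lam i
  rcases Nat.eq_zero_or_pos lam0 with h | hpos
  · simp [h]
  have : eta m r lam j ≤ m * j / lam0 := csSup_le' fun v ⟨s, _, hs, hv⟩ =>
    (Nat.le_div_iff_mul_le hpos).mpr (hv ▸ Nat.mul_comm lam0 _ ▸ sum_mul_kinf_le hs)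
  exact (Nat.mul_le_mul_left lam0 this).trans (Nat.mul_div_le _ _)

lemma sum_mul_eta_lt {j : ℕ} (hco : Nat.Coprime m (∑ i ∈ range r, lam i)) (hj0 : 0 < j)
    (hj : j < ∑ i ∈ range r, lam i) : (∑ i ∈ range r, lam i) * eta m r lam j < m * j := by
  refine (sum_mul_eta_le j).lt_of_ne fun h => ?_
  have : (∑ i ∈ range r, lam i) ∣ j := hco.symm.dvd_of_dvd_mul_left ⟨_, h.symm⟩
  exact absurd (Nat.le_of_dvd hj0 this) (not_le.mpr hj)

end EtaBounds

section EtaExt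

variable {m r lam0 : ℕ} {lam : ℕ → ℕ} {k : ℕ}

lemma etaExt_of_lt (hk : k < r) : etaExt m r lam0 lam k = 0 := if_pos hk

lemma etaExt_of_le_of_lt (hrk : r ≤ k) (hk : k < lam0) : etaExt m r lam0 lam k = eta m r lam k := by
  rw [etaExt, if_neg (not_lt.mpr hrk), if_pos hk]

lemma etaExt_of_le (hrl : r ≤ lam0) (hk : lam0 ≤ k) : etaExt m r lam0 lam k = m - 1 := by
  rw [etaExt, if_neg (by omega), if_neg (not_lt.mpr hk)]

lemma le_and_lt_of_etaExt_add_etaExt_eq (hm : 1 ≤ m) (hr : 1 ≤ r) (hrl : r ≤ lam0)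
    (hyp : etaExt m r lam0 lam k + etaExt m r lam0 lam (r + lam0 - 1 - k) = m) :
    r ≤ k ∧ k < lam0 := by
  constructor
  · by_contra! hkr
    rw [etaExt_of_lt hkr, etaExt_of_le hrl (by omega)] at hyp
    omega
  · by_contra! hkl
    rw [etaExt_of_le hrl hkl, etaExt_of_lt (by omega)] at hyp
    omega

lemma eps_add_eps_eq (hr : 1 ≤ r) (hk : k ≤ r + lam0 - 1)
    (hyp : etaExt m r lam0 lam k + etaExt m r lam0 lam (r + lam0 - 1 - k) = m) :
    eps m r lam0 lam k + eps m r lam0 lam (r + lam0 - 1 - k) = eps m r lam0 lam (r - 1) - lam0 := by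
  have hypZ : (etaExt m r lam0 lam k : ℤ) + etaExt m r lam0 lam (r + lam0 - 1 - k) = m := by
    exact_mod_cast hyp
  simp only [eps, etaExt_of_lt (show r - 1 < r by omega)]
  push_cast [Nat.cast_sub hk, Nat.cast_sub (show 1 ≤ r + lam0 by omega), Nat.cast_sub hr]
  linear_combination (-(lam0 : ℤ)) * hypZ

end EtaExt

theorem stmt8_general (m r : ℕ) (lam : ℕ → ℕ) (hm : 2 ≤ m) (hr : 2 ≤ r)
    (lam0 : ℕ)
    (h0 : lam0 = ∑ i ∈ Finset.range r, lam i) (hco : Nat.gcd m lam0 = 1) (hrl : r ≤ lam0)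
    (k : ℕ) (hk : k ≤ r + lam0 - 1)
    (hyp : etaExt m r lam0 lam k + etaExt m r lam0 lam (r + lam0 - 1 - k) = m) :
    eps m r lam0 lam k + eps m r lam0 lam (r + lam0 - 1 - k) =
        eps m r lam0 lam (r - 1) - lam0 ∧
      eps m r lam0 lam (r - 1) > eps m r lam0 lam k := by
  set k' := r + lam0 - 1 - k
  obtain ⟨hrk, hkl⟩ := le_and_lt_of_etaExt_add_etaExt_eq (by omega) (by omega) hrl hyp
  have hη' : lam0 * eta m r lam k' < m * k' :=
    h0 ▸ sum_mul_eta_lt (h0 ▸ hco) (by omega) (by omega)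
  have hsum : (k : ℤ) + k' = r - 1 + lam0 := by omega
  refine ⟨eps_add_eps_eq (by omega) hk hyp, ?_⟩
  rw [etaExt_of_le_of_lt hrk hkl, etaExt_of_le_of_lt (by omega) (by omega)] at hyp
  have hypZ : (eta m r lam k : ℤ) + eta m r lam k' = m := by exact_mod_cast hyp
  have hηZ : (lam0 : ℤ) * eta m r lam k' < m * k' := by exact_mod_cast hη'
  simp only [eps, etaExt_of_lt (show r - 1 < r by omega), etaExt_of_le_of_lt hrk hkl]
  push_cast [Nat.cast_sub (show 1 ≤ r by omega)]
  linear_combination hηZ - (lam0 : ℤ) * hypZ + (m : ℤ) * hsum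

/-- If η_k + η_{r+λ₀-1-k} = m, then ε_k + ε_{r+λ₀-1-k} = ε_{r-1} - λ₀ and ε_{r-1} > ε_k. -/
theorem stmt8 (m r : ℕ) (lam : ℕ → ℕ) (hm : 2 ≤ m) (hr : 2 ≤ r)
    (hlam : ∀ i, i < r → 1 ≤ lam i ∧ lam i < m) (lam0 : ℕ)
    (h0 : lam0 = ∑ i ∈ Finset.range r, lam i) (hco : Nat.gcd m lam0 = 1) (hrl : r ≤ lam0)
    (k : ℕ) (hk : k ≤ r + lam0 - 1)
    (hyp : etaExt m r lam0 lam k + etaExt m r lam0 lam (r + lam0 - 1 - k) = m) :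
    eps m r lam0 lam k + eps m r lam0 lam (r + lam0 - 1 - k) =
        eps m r lam0 lam (r - 1) - lam0 ∧
      eps m r lam0 lam (r - 1) > eps m r lam0 lam k :=
  stmt8_general m r lam hm hr lam0 h0 hco hrl k hk hyp
end

section
/- If λ_j divides m for every j = 1,…,r, then η_s + η_{r+λ₀-1-s} = m for every s with r ≤ s ≤ λ₀ - 1, where η_s = max over tuples (s₁,…,s_r) with 1 ≤ s_i ≤ λ_i, ∑ s_i = s of min_{1≤i≤r} ⌊s_i m / λ_i⌋. -/
open Finset

/-!
Write `dᵢ = m / λᵢ`, so that `λᵢ dᵢ = m` and `⌊sᵢ m / λᵢ⌋ = sᵢ dᵢ`. An admissible tuple has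
`min sᵢ dᵢ > u` exactly when `sᵢ ≥ ⌊u / dᵢ⌋ + 1` for all `i`, and every `k` between `∑ aᵢ` and
`∑ bᵢ` is the sum of a tuple with `aᵢ ≤ sᵢ ≤ bᵢ`. Hence `u < η_k ↔ G u ≤ k` for `u < m`, `k ≤ λ₀`,
where `G u = ∑ᵢ (⌊u / dᵢ⌋ + 1)`: the function `η` is the inverse of the step function `G`. Since
`λᵢ dᵢ = m`, we have `⌊u / dᵢ⌋ + ⌊(m - 1 - u) / dᵢ⌋ = λᵢ - 1`, hence `G u + G (m - 1 - u) = λ₀ + r`,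
and this symmetry of `G` turns into the symmetry `η_s + η_{r + λ₀ - 1 - s} = m` of its inverse.
-/

theorem Nat.div_add_div_add_one_of_add_add_one_eq_mul {u w l d : ℕ} (hd : 0 < d)
    (h : u + w + 1 = l * d) : u / d + w / d + 1 = l := by
  have hu := Nat.div_add_mod u d
  have hw := Nat.div_add_mod w d
  have hu' := Nat.mod_lt u hd
  have hw' := Nat.mod_lt w hd
  rw [mul_comm] at h
  rcases lt_trichotomy (u / d + w / d + 1) l with hlt | heq | hgt
  · have := Nat.mul_le_mul_left d (show u / d + w / d + 2 ≤ l by omega)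
    rw [mul_add, mul_add] at this
    omega
  · exact heq
  · have := Nat.mul_le_mul_left d (show l ≤ u / d + w / d by omega)
    rw [mul_add] at this
    omega

theorem Finset.exists_le_le_sum_range_eq {a b : ℕ → ℕ} {n k : ℕ} (hab : ∀ i < n, a i ≤ b i)
    (ha : ∑ i ∈ range n, a i ≤ k) (hb : k ≤ ∑ i ∈ range n, b i) :
    ∃ s : ℕ → ℕ, (∀ i < n, a i ≤ s i ∧ s i ≤ b i) ∧ ∑ i ∈ range n, s i = k := by
  induction n generalizing k with
  | zero => exact ⟨a, by simp, by simp_all⟩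
  | succ n ih =>
    rw [sum_range_succ] at ha hb
    have hsum_le : ∑ i ∈ range n, a i ≤ ∑ i ∈ range n, b i :=
      sum_le_sum fun i hi => hab i (by simp at hi; omega)
    have habn := hab n n.lt_succ_self
    -- the last coordinate takes as little as the first `n` coordinates can compensate for
    set t := max (a n) (k - ∑ i ∈ range n, b i)
    obtain ⟨s, hs, hsum⟩ := ih (k := k - t) (fun i hi => hab i (by omega))
      (by omega) (by omega)
    refine ⟨fun i => if i < n then s i else t, fun i hi => ?_, ?_⟩
    · by_cases hin : i < n
      · simpa [hin] using hs i hin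
      · have : i = n := by omega
        subst this
        simp only [lt_irrefl, if_false]
        omega
    · rw [sum_range_succ, sum_congr rfl fun i hi => if_pos (mem_range.mp hi), hsum,
        if_neg (lt_irrefl n)]
      omega

theorem Nat.div_pos_of_dvd {a m : ℕ} (hm : 0 < m) (h : a ∣ m) : 0 < m / a :=
  Nat.div_pos (Nat.le_of_dvd hm h) (Nat.pos_of_dvd_of_pos h hm)

theorem Nat.lt_mul_div_iff_div_div_lt {a m u t : ℕ} (hm : 0 < m) (h : a ∣ m) :
    u < t * m / a ↔ u / (m / a) < t := by
  rw [Nat.mul_div_assoc _ h, Nat.div_lt_iff_lt_mul (Nat.div_pos_of_dvd hm h)]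

section Eta

variable {m r : ℕ} {lam : ℕ → ℕ}

theorem kinf_le {s : ℕ → ℕ} {i : ℕ} (hi : i < r) : kinf m r lam s ≤ s i * m / lam i :=
  Nat.sInf_le ⟨i, hi, rfl⟩

theorem le_kinf {s : ℕ → ℕ} {v : ℕ} (hr : 0 < r) (h : ∀ i < r, v ≤ s i * m / lam i) :
    v ≤ kinf m r lam s :=
  le_csInf ⟨_, 0, hr, rfl⟩ fun _ ⟨i, hi, hw⟩ => hw ▸ h i hi

theorem kinf_le_eta {s : ℕ → ℕ} (hr : 0 < r) (hs : ∀ i < r, 1 ≤ s i ∧ s i ≤ lam i) :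
    kinf m r lam s ≤ eta m r lam (∑ i ∈ range r, s i) := by
  refine le_csSup ⟨m, ?_⟩ ⟨s, hs, rfl, rfl⟩
  rintro _ ⟨t, ht, -, rfl⟩
  obtain ⟨ht1, htl⟩ := ht 0 hr
  calc kinf m r lam t ≤ t 0 * m / lam 0 := kinf_le hr
    _ ≤ lam 0 * m / lam 0 := Nat.div_le_div_right (Nat.mul_le_mul_right m htl)
    _ = m := Nat.mul_div_cancel_left m (by omega)

theorem eta_le_of_forall_kinf_le {k v : ℕ}
    (h : ∀ s : ℕ → ℕ, (∀ i < r, 1 ≤ s i ∧ s i ≤ lam i) → ∑ i ∈ range r, s i = k →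
      kinf m r lam s ≤ v) :
    eta m r lam k ≤ v :=
  csSup_le' fun _ ⟨s, hs, hsum, hv⟩ => hv ▸ h s hs hsum

variable (m r lam) in
/-- The least sum of an admissible tuple `s` with `u < kinf m r lam s`. -/
def etaThreshold (u : ℕ) : ℕ :=
  ∑ i ∈ range r, (u / (m / lam i) + 1)

theorem etaThreshold_zero : etaThreshold m r lam 0 = r := by
  simp [etaThreshold]

theorem etaThreshold_add_etaThreshold (hm : 0 < m) (hdvd : ∀ i < r, lam i ∣ m) {u w : ℕ}
    (huw : u + w + 1 = m) :
    etaThreshold m r lam u + etaThreshold m r lam w = ∑ i ∈ range r, lam i + r := by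
  have hterm : ∀ i ∈ range r, u / (m / lam i) + 1 + (w / (m / lam i) + 1) = lam i + 1 := by
    intro i hi
    have hi := hdvd i (mem_range.mp hi)
    have := Nat.div_add_div_add_one_of_add_add_one_eq_mul (u := u) (w := w)
      (Nat.div_pos_of_dvd hm hi)
      (huw.trans (Nat.mul_div_cancel' hi).symm)
    omega
  rw [etaThreshold, etaThreshold, ← sum_add_distrib, sum_congr rfl hterm, sum_add_distrib,
    sum_const, card_range, smul_eq_mul, mul_one]

theorem lt_eta_iff (hm : 0 < m) (hr : 0 < r) (hdvd : ∀ i < r, lam i ∣ m) {u k : ℕ}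
    (hu : u < m) (hk : k ≤ ∑ i ∈ range r, lam i) :
    u < eta m r lam k ↔ etaThreshold m r lam u ≤ k := by
  have hdiv := fun i (hi : i < r) t => Nat.lt_mul_div_iff_div_div_lt (u := u) (t := t) hm (hdvd i hi)
  refine ⟨fun hlt => ?_, fun hk' => ?_⟩
  · by_contra! hk'
    refine hlt.not_ge (eta_le_of_forall_kinf_le fun s _ hsum => ?_)
    obtain ⟨i, hi, hsi⟩ := exists_lt_of_sum_lt (hsum ▸ hk')
    have hi := mem_range.mp hi
    exact (kinf_le hi).trans (not_lt.mp fun h => (hdiv i hi _).mp h |>.not_ge (by omega))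
  · obtain ⟨s, hs, rfl⟩ := exists_le_le_sum_range_eq (a := fun i => u / (m / lam i) + 1)
      (fun i hi => (hdiv i hi _).mp
        (by rwa [Nat.mul_div_cancel_left _ (Nat.pos_of_dvd_of_pos (hdvd i hi) hm)]))
      hk' hk
    calc u < kinf m r lam s := le_kinf hr fun i hi => (hdiv i hi _).mpr (hs i hi).1
      _ ≤ eta m r lam (∑ i ∈ range r, s i) :=
        kinf_le_eta hr fun i hi => ⟨(Nat.le_add_left 1 _).trans (hs i hi).1, (hs i hi).2⟩

theorem eta_pos (hm : 0 < m) (hr : 0 < r) (hdvd : ∀ i < r, lam i ∣ m) {k : ℕ} (hrk : r ≤ k)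
    (hk : k ≤ ∑ i ∈ range r, lam i) : 0 < eta m r lam k :=
  (lt_eta_iff hm hr hdvd hm hk).mpr (etaThreshold_zero ▸ hrk)

theorem eta_lt (hm : 0 < m) (hr : 0 < r) (hdvd : ∀ i < r, lam i ∣ m) {k : ℕ}
    (hk : k < ∑ i ∈ range r, lam i) : eta m r lam k < m := by
  have hG := etaThreshold_add_etaThreshold (lam := lam) hm hdvd (u := 0) (w := m - 1) (by omega)
  rw [etaThreshold_zero] at hG
  have := (lt_eta_iff hm hr hdvd (u := m - 1) (by omega) hk.le).not.mpr (by omega)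
  omega

theorem eta_add_eta_eq (hm : 0 < m) (hr : 0 < r) (hdvd : ∀ i < r, lam i ∣ m) {k : ℕ}
    (hrk : r ≤ k) (hk : k < ∑ i ∈ range r, lam i) :
    eta m r lam k + eta m r lam (r + ∑ i ∈ range r, lam i - 1 - k) = m := by
  set v := eta m r lam k
  have hv_pos : 0 < v := eta_pos hm hr hdvd hrk hk.le
  have hv_lt : v < m := eta_lt hm hr hdvd hk
  have hG_pred : etaThreshold m r lam (v - 1) ≤ k :=
    (lt_eta_iff hm hr hdvd (by omega) hk.le).mp (by omega)
  have hG : k < etaThreshold m r lam v :=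
    not_le.mp ((lt_eta_iff hm hr hdvd hv_lt hk.le).not.mp (lt_irrefl v))
  have hsym₁ := etaThreshold_add_etaThreshold (lam := lam) hm hdvd (u := v - 1) (w := m - v)
    (by omega)
  have hsym₂ := etaThreshold_add_etaThreshold (lam := lam) hm hdvd (u := v) (w := m - v - 1)
    (by omega)
  have hlower := (lt_eta_iff hm hr hdvd (u := m - v - 1) (k := r + ∑ i ∈ range r, lam i - 1 - k)
    (by omega) (by omega)).mpr (by omega)
  have hupper := (lt_eta_iff hm hr hdvd (u := m - v) (k := r + ∑ i ∈ range r, lam i - 1 - k)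
    (by omega) (by omega)).not.mpr (by omega)
  omega

end Eta

theorem stmt12_general (m r : ℕ) (lam : ℕ → ℕ) (hm : 2 ≤ m) (hr : 2 ≤ r)
    (hdvd : ∀ j, j < r → lam j ∣ m)
    (lam0 : ℕ) (h0 : lam0 = ∑ i ∈ Finset.range r, lam i) :
    ∀ s, r ≤ s → s ≤ lam0 - 1 →
      eta m r lam s + eta m r lam (r + lam0 - 1 - s) = m := by
  intro s hrs hs
  subst h0
  exact eta_add_eta_eq (by omega) (by omega) hdvd hrs (by omega)

/-- If λ_j ∣ m for every j, then η_s + η_{r+λ₀-1-s} = m for every r ≤ s ≤ λ₀ - 1. -/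
theorem stmt12 (m r : ℕ) (lam : ℕ → ℕ) (hm : 2 ≤ m) (hr : 2 ≤ r)
    (hlam : ∀ i, i < r → 1 ≤ lam i ∧ lam i < m) (hdvd : ∀ j, j < r → lam j ∣ m)
    (lam0 : ℕ) (h0 : lam0 = ∑ i ∈ Finset.range r, lam i) (hrl : r < lam0) :
    ∀ s, r ≤ s → s ≤ lam0 - 1 →
      eta m r lam s + eta m r lam (r + lam0 - 1 - s) = m :=
  stmt12_general m r lam hm hr hdvd lam0 h0
end

section
/- Let H be a numerical semigroup and n a nonzero element of H with Apéry set Ap(H,n) = {a₀ < a₁ < ⋯ < a_{n-1}}. Then H is symmetric (i.e., its Frobenius number F satisfies F = 2g - 1 where g is the genus) if and only if a_i + a_{n-1-i} = a_{n-1} for each i = 0,…,n-1. -/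
open Finset

/-! With `A = max Ap(H,n)` the Frobenius number is `F = A - n`, and `x ↦ F - x` maps the elements
of `H` below `F` injectively into the gaps. Hence `F + 1 ≥ 2g`, with equality iff `F - y ∈ H` for
every gap `y`. Writing a gap as `y = w - (t + 1) n` with `w ∈ Ap(H,n)`, this is equivalent to
`w ↦ A - w` mapping `Ap(H,n)` into itself; since that map reverses order, it must send `aᵢ` to
`a_{n-1-i}`. -/

theorem eq_two_mul_ncard_compl_iff {H : Set ℕ} (hadd : ∀ a ∈ H, ∀ b ∈ H, a + b ∈ H) {c : ℕ}
    (hlt : ∀ y ∉ H, y < c) (hne : ∀ z ∈ H, z + 1 ≠ c) :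
    c = 2 * {x | x ∉ H}.ncard ↔ ∀ y ∉ H, ∃ z ∈ H, z + y + 1 = c := by
  classical
  set G := (range c).filter (· ∉ H)
  set S := (range c).filter (· ∈ H)
  have hG : {x | x ∉ H}.ncard = #G := by
    rw [← Set.ncard_coe_finset]
    congr
    ext y
    simpa [G] using hlt y
  have hcard : #S + #G = c := by
    simpa [S, G] using card_filter_add_card_filter_not (s := range c) (· ∈ H)
  have hS_mem : ∀ {x}, x ∈ S ↔ x < c ∧ x ∈ H := by simp [S]
  have hG_mem : ∀ {y}, y ∈ G ↔ y < c ∧ y ∉ H := by simp [G]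
  have hinj : Set.InjOn (fun x => c - 1 - x) S := fun x hx y hy hxy => by
    have := (hS_mem.1 hx).1
    have := (hS_mem.1 hy).1
    simp only at hxy
    omega
  have hsub : S.image (fun x => c - 1 - x) ⊆ G := by
    simp only [subset_iff, mem_image, forall_exists_index, and_imp]
    rintro _ x hx rfl
    obtain ⟨hxc, hxH⟩ := hS_mem.1 hx
    exact hG_mem.2 ⟨by omega, fun hmem => hne _ (hadd _ hmem _ hxH) (by omega)⟩
  have himage := card_image_of_injOn hinj
  rw [hG]
  calc c = 2 * #G ↔ #G ≤ #(S.image fun x => c - 1 - x) := by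
        have := card_le_card hsub
        omega
    _ ↔ G ⊆ S.image fun x => c - 1 - x :=
        ⟨fun h => (eq_of_subset_of_card_le hsub h).superset, card_le_card⟩
    _ ↔ ∀ y ∉ H, ∃ z ∈ H, z + y + 1 = c := by
        simp only [subset_iff, mem_image, hG_mem, hS_mem]
        refine ⟨fun h y hy => ?_, fun h y hy => ?_⟩
        · obtain ⟨z, ⟨hzc, hzH⟩, rfl⟩ := h ⟨hlt y hy, hy⟩
          exact ⟨z, hzH, by omega⟩
        · obtain ⟨z, hzH, hz⟩ := h y hy.2
          exact ⟨z, ⟨by omega, hzH⟩, by omega⟩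

-- `s < n` is needed because `s - n` truncates to `0 ∈ H` when `s < n`.
def apery (H : Set ℕ) (n : ℕ) : Set ℕ := {s ∈ H | s < n ∨ s - n ∉ H}

theorem IsNumericalSemigroup.mul_mem {H : Set ℕ} (hH : IsNumericalSemigroup H) {n : ℕ}
    (hn : n ∈ H) (t : ℕ) : t * n ∈ H := by
  induction t with
  | zero => simpa using hH.1
  | succ t ih => simpa [add_one_mul] using hH.2.1 _ ih _ hn

theorem add_ne_of_mem_apery {H : Set ℕ} {n A z : ℕ} (hA : A ∈ apery H n) (hz : z ∈ H) :
    z + n ≠ A := by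
  rintro rfl
  rcases hA.2 with h | h
  · omega
  · simp [hz] at h

theorem exists_add_succ_mul_mem_apery {H : Set ℕ} (hfin : {x | x ∉ H}.Finite) {n y : ℕ}
    (hn0 : n ≠ 0) (hy : y ∉ H) : ∃ t, y + (t + 1) * n ∈ apery H n := by
  classical
  have hex : ∃ t, y + t * n ∈ H := by
    obtain ⟨B, hB⟩ := hfin.bddAbove
    refine ⟨B + 1, by_contra fun h => ?_⟩
    have := hB h
    have : B + 1 ≤ (B + 1) * n := Nat.le_mul_of_pos_right _ (Nat.pos_of_ne_zero hn0)
    omega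
  obtain ⟨t, ht⟩ : ∃ t, Nat.find hex = t + 1 :=
    Nat.exists_eq_add_one.2 <| Nat.pos_of_ne_zero fun h => hy (by simpa [h] using Nat.find_spec hex)
  refine ⟨t, ht ▸ Nat.find_spec hex, Or.inr ?_⟩
  rw [add_one_mul, ← add_assoc, Nat.add_sub_cancel]
  exact Nat.find_min hex (by omega)

section MaxApery

variable {H : Set ℕ} {n A : ℕ}

theorem add_le_of_isGreatest_apery (hfin : {x | x ∉ H}.Finite) (hn0 : n ≠ 0)
    (hA : IsGreatest (apery H n) A) {y : ℕ} (hy : y ∉ H) : y + n ≤ A := by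
  obtain ⟨t, ht⟩ := exists_add_succ_mul_mem_apery hfin hn0 hy
  have := hA.2 ht
  have : n ≤ (t + 1) * n := Nat.le_mul_of_pos_left _ t.succ_pos
  omega

theorem sub_one_le_of_isGreatest_apery (hfin : {x | x ∉ H}.Finite) (hn0 : n ≠ 0)
    (hA : IsGreatest (apery H n) A) : n - 1 ≤ A := by
  by_cases h : n - 1 ∈ H
  · exact hA.2 ⟨h, Or.inl (by omega)⟩
  · have := add_le_of_isGreatest_apery hfin hn0 hA h
    omega

theorem isGreatest_int_notMem_of_isGreatest_apery (hfin : {x | x ∉ H}.Finite) (hn0 : n ≠ 0)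
    (hA : IsGreatest (apery H n) A) :
    IsGreatest {x : ℤ | ∀ h ∈ H, (h : ℤ) ≠ x} (A - n) := by
  refine ⟨fun h hh => ?_, fun x hx => ?_⟩
  · have := add_ne_of_mem_apery hA.1 hh
    omega
  · rcases lt_or_ge x 0 with hneg | hpos
    · have := sub_one_le_of_isGreatest_apery hfin hn0 hA
      omega
    · lift x to ℕ using hpos
      have := add_le_of_isGreatest_apery hfin hn0 hA fun hx' => hx x hx' rfl
      omega

theorem forall_notMem_exists_add_eq_iff (hH : IsNumericalSemigroup H) (hn : n ∈ H)
    (hn0 : n ≠ 0) (hA : IsGreatest (apery H n) A) :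
    (∀ y ∉ H, ∃ z ∈ H, z + y + n = A) ↔ ∀ w ∈ apery H n, ∃ w' ∈ apery H n, w + w' = A := by
  refine ⟨fun hsym w hw => ⟨A - w, ?_, by have := hA.2 hw; omega⟩, fun h y hy => ?_⟩
  · have hwA := hA.2 hw
    have hAw : A - w ∈ H := by
      rcases Nat.lt_or_ge w n with hlt | hge
      · by_contra hc
        have := add_le_of_isGreatest_apery hH.2.2 hn0 hA hc
        omega
      · have hwn : w - n ∉ H := hw.2.resolve_left (by omega)
        obtain ⟨z, hzH, hz⟩ := hsym _ hwn
        rwa [show A - w = z by omega]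
    refine ⟨hAw, (Nat.lt_or_ge (A - w) n).imp_right fun hge hc => ?_⟩
    exact add_ne_of_mem_apery hA.1 (hH.2.1 _ hc _ hw.1) (by omega)
  · obtain ⟨t, ht⟩ := exists_add_succ_mul_mem_apery hH.2.2 hn0 hy
    obtain ⟨w', hw', hsum⟩ := h _ ht
    exact ⟨w' + t * n, hH.2.1 _ hw'.1 _ (hH.mul_mem hn t), by linarith⟩

end MaxApery

theorem StrictMono.add_rev_eq_of_forall_exists_add_eq {M : Type*} [AddCommMonoid M]
    [LinearOrder M] [IsOrderedCancelAddMonoid M] {n : ℕ} {a : Fin n → M} (ha : StrictMono a)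
    {A : M} (h : ∀ i, ∃ j, a i + a j = A) (i : Fin n) : a i + a i.rev = A := by
  choose j hj using h
  have hj_anti : StrictAnti j := fun x y hxy =>
    ha.lt_iff_lt.1 <| lt_of_not_ge fun hle =>
      (add_lt_add_of_lt_of_le (ha hxy) hle).ne (by rw [hj, hj])
  have hj_rev : j i = i.rev := by
    simpa using (hj_anti.comp Fin.rev_strictAnti).apply_eq (x := i.rev)
  exact hj_rev ▸ hj i

/-- H is symmetric iff a_i + a_{n-1-i} = a_{n-1} for the ordered Apéry set a₀ < ⋯ < a_{n-1}. -/
theorem stmt15 (H : Set ℕ) (hH : IsNumericalSemigroup H) (n : ℕ) (hn : n ∈ H) (hn0 : n ≠ 0)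
    (a : Fin n → ℕ) (hmono : StrictMono a)
    (hap : Set.range a = {s ∈ H | s < n ∨ s - n ∉ H}) :
    (∃ F : ℤ, IsGreatest {x : ℤ | ∀ h ∈ H, (h : ℤ) ≠ x} F ∧
        F = 2 * (Set.ncard {x : ℕ | x ∉ H} : ℤ) - 1) ↔
      ∀ i : Fin n, a i + a (Fin.rev i) = a ⟨n - 1, by omega⟩ := by
  set A := a ⟨n - 1, by omega⟩
  have hap' : apery H n = Set.range a := hap.symm
  have hA : IsGreatest (apery H n) A := by
    rw [hap']
    exact ⟨Set.mem_range_self _, Set.forall_mem_range.2 fun i =>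
      hmono.monotone (Fin.le_def.2 (by simp only; omega))⟩
  have hF := isGreatest_int_notMem_of_isGreatest_apery hH.2.2 hn0 hA
  have hnA := sub_one_le_of_isGreatest_apery hH.2.2 hn0 hA
  calc _ ↔ A + 1 - n = 2 * {x | x ∉ H}.ncard :=
        ⟨fun ⟨F, hF', hFg⟩ => by have := hF'.unique hF; omega, fun h => ⟨_, hF, by omega⟩⟩
    _ ↔ ∀ y ∉ H, ∃ z ∈ H, z + y + 1 = A + 1 - n :=
        eq_two_mul_ncard_compl_iff hH.2.1
          (fun y hy => by have := add_le_of_isGreatest_apery hH.2.2 hn0 hA hy; omega)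
          (fun z hz => by have := add_ne_of_mem_apery hA.1 hz; omega)
    _ ↔ ∀ y ∉ H, ∃ z ∈ H, z + y + n = A := by
        refine forall₂_congr fun y _ => exists_congr fun z => and_congr_right fun _ => ?_
        omega
    _ ↔ ∀ w ∈ apery H n, ∃ w' ∈ apery H n, w + w' = A :=
        forall_notMem_exists_add_eq_iff hH hn hn0 hA
    _ ↔ ∀ i, ∃ j, a i + a j = A := by
        simp only [hap', Set.forall_mem_range, Set.exists_range_iff]
    _ ↔ ∀ i, a i + a i.rev = A :=
        ⟨hmono.add_rev_eq_of_forall_exists_add_eq, fun h i => ⟨_, h i⟩⟩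
end
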